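/- arXiv:2212.06093 — 3 statements merged into one kernel-verified Lean document; each statement's English description precedes it below -/
import Mathlib

section
/- Let Ω_ℓ and Ω_{nℓ} be disjoint open bounded subsets of ℝ^N with Ω_{nℓ} δ-connected and dist(Ω_ℓ, Ω_{nℓ}) < δ (condition (P1)), and let J satisfy (J1) and (J2). Suppose f₁, f₂ ∈ L²(Ω_{nℓ}) with f₁ ≤ f₂ a.e. in Ω_{nℓ}, u₁, u₂ ∈ L²(Ω_ℓ) with u₁ ≤ u₂ a.e. in Ω_ℓ, and for i = 1, 2 let v_i ∈ L²(Ω_{nℓ}) be the solution of the nonlocal problem with data (f_i, u_i). Then v₁ ≤ v₂ almost everywhere in Ω_{nℓ}. -/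
open MeasureTheory Metric

/-- An open set `D ⊆ ℝ^N` is `δ`-connected if it cannot be written as a disjoint union of
two nonempty (relatively) open sets that are at distance greater than or equal to `δ`. -/
def DeltaConnected {N : ℕ} (δ : ℝ) (D : Set (EuclideanSpace ℝ (Fin N))) : Prop :=
  ¬ ∃ A B : Set (EuclideanSpace ℝ (Fin N)),
      IsOpen A ∧ IsOpen B ∧ A.Nonempty ∧ B.Nonempty ∧
      A ∪ B = D ∧ A ∩ B = ∅ ∧ ∀ x ∈ A, ∀ y ∈ B, δ ≤ dist x y

/-!
The difference `w = v₁ - v₂` satisfies `0 ≤ L(0, w)` on `Ω_{nℓ}`, where `L` is the nonlocal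
operator, so the comparison follows from a weak maximum principle. Multiplying that inequality
by `w⁺`, integrating and applying Fubini gives
`∫∫_{Ω_{nℓ}²} J(x - y) (w⁺(x) - w⁺(y))² + ∫_{Ω_{nℓ}} (∫_{Ω_{nℓ}ᶜ} J(x - y) dx) w⁺(y)² dy ≤ 0`,
so both nonnegative terms vanish. As `J > 0` on the ball of radius `2δ`, the first one makes `w⁺`
a.e. constant on each `δ`-ball of `Ω_{nℓ}`, hence on `Ω_{nℓ}` by `δ`-connectedness; by (P1) the
exterior mass `∫_{Ω_{nℓ}ᶜ} J(x - y) dx` is positive near some point of `Ω_{nℓ}`, so the second one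
forces this constant to be `0`.
-/

open Filter Topology Set
open scoped ENNReal

theorem exists_ae_eq_const_of_ae_prod_eq {α β : Type*} [MeasurableSpace α] {μ : Measure α}
    [SFinite μ] (hμ : μ ≠ 0) {f : α → β} (h : ∀ᵐ p ∂μ.prod μ, f p.1 = f p.2) :
    ∃ k, ∀ᵐ x ∂μ, f x = k := by
  have : (ae μ).NeBot := ae_neBot.2 hμ
  obtain ⟨x₀, hx₀⟩ := (Measure.ae_ae_of_ae_prod h).exists
  exact ⟨f x₀, hx₀.mono fun _ hy => hy.symm⟩

theorem exists_of_ae_restrict_of_eventually_nhds {X : Type*} [TopologicalSpace X]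
    [MeasurableSpace X] [OpensMeasurableSpace X] {μ : Measure X} [μ.IsOpenPosMeasure]
    {S : Set X} (hS : IsOpen S) {y₀ : X} (hy₀ : y₀ ∈ S) {P Q : X → Prop}
    (hP : ∀ᵐ y ∂μ.restrict S, P y) (hQ : ∀ᶠ y in 𝓝 y₀, Q y) : ∃ y, P y ∧ Q y := by
  obtain ⟨U, hUQ, hU, hy₀U⟩ := eventually_nhds_iff.1 hQ
  have := ae_restrict_neBot.2 ((hU.inter hS).measure_ne_zero μ ⟨y₀, hy₀U, hy₀⟩)
  obtain ⟨y, hyP, hyU, -⟩ := ((ae_restrict_of_ae_restrict_of_subset inter_subset_right hP).and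
    (ae_restrict_mem (hU.inter hS).measurableSet)).exists
  exact ⟨y, hyP, hUQ y hyU⟩

section DeltaConnected

variable {N : ℕ} {δ : ℝ} {D : Set (EuclideanSpace ℝ (Fin N))}

theorem DeltaConnected.apply_eq_of_forall_dist_lt {α : Type*} (hD : DeltaConnected δ D)
    (hD_open : IsOpen D) (hδ : 0 < δ) {κ : EuclideanSpace ℝ (Fin N) → α}
    (hκ : ∀ z ∈ D, ∀ z' ∈ D, dist z z' < δ → κ z = κ z') {z₀ z : EuclideanSpace ℝ (Fin N)}
    (hz₀ : z₀ ∈ D) (hz : z ∈ D) : κ z = κ z₀ := by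
  have hopen : ∀ P : α → Prop, IsOpen {z | z ∈ D ∧ P (κ z)} := by
    refine fun P => isOpen_iff_mem_nhds.2 fun z hz => ?_
    filter_upwards [ball_mem_nhds z hδ, hD_open.mem_nhds hz.1] with z' hz' hz'D
    exact ⟨hz'D, hκ z' hz'D z hz.1 (mem_ball.1 hz') ▸ hz.2⟩
  by_contra hne
  refine hD ⟨_, _, hopen (· = κ z₀), hopen (· ≠ κ z₀), ⟨z₀, hz₀, rfl⟩, ⟨z, hz, hne⟩, ?_, ?_, ?_⟩
  · ext x; simp only [mem_union, mem_ofPred_eq]; tauto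
  · ext x; simp only [mem_inter_iff, mem_ofPred_eq, mem_empty_iff_false, iff_false]; tauto
  · rintro x ⟨hxD, hx⟩ y ⟨hyD, hy⟩
    by_contra! hlt
    exact hy (hκ y hyD x hxD (dist_comm x y ▸ hlt) ▸ hx)

theorem DeltaConnected.exists_ae_eq_const (hD : DeltaConnected δ D) (hD_open : IsOpen D)
    (hδ : 0 < δ) (hD_ne : D.Nonempty) {μ : Measure (EuclideanSpace ℝ (Fin N))}
    [μ.IsOpenPosMeasure] [SFinite μ] {W : EuclideanSpace ℝ (Fin N) → ℝ}
    (hW : ∀ᵐ p ∂(μ.restrict D).prod (μ.restrict D), dist p.1 p.2 < 2 * δ → W p.1 = W p.2) :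
    ∃ k, ∀ᵐ x ∂μ.restrict D, W x = k := by
  have hball : ∀ z ∈ D, ∃ k, ∀ᵐ x ∂μ.restrict (ball z δ ∩ D), W x = k := by
    intro z hz
    have hB : MeasurableSet (ball z δ ∩ D) := measurableSet_ball.inter hD_open.measurableSet
    refine exists_ae_eq_const_of_ae_prod_eq
      (by simpa using (isOpen_ball.inter hD_open).measure_ne_zero μ ⟨z, mem_ball_self hδ, hz⟩) ?_
    rw [Measure.prod_restrict] at hW ⊢
    filter_upwards [ae_restrict_of_ae_restrict_of_subset
      (prod_mono inter_subset_right inter_subset_right) hW, ae_restrict_mem (hB.prod hB)]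
      with p hp ⟨⟨hp₁, _⟩, hp₂, _⟩
    refine hp ((dist_triangle_right _ _ z).trans_lt ?_)
    linarith [mem_ball.1 hp₁, mem_ball.1 hp₂]
  choose! κ hκ using hball
  have hκ_loc : ∀ z ∈ D, ∀ z' ∈ D, dist z z' < δ → κ z = κ z' := by
    intro z hz z' hz' hzz'
    have := ae_restrict_neBot.2 (((isOpen_ball.inter hD_open).inter
      (isOpen_ball.inter hD_open)).measure_ne_zero μ
        ⟨z, ⟨mem_ball_self hδ, hz⟩, mem_ball.2 hzz', hz⟩)
    obtain ⟨x, hx, hx'⟩ := ((ae_restrict_of_ae_restrict_of_subset inter_subset_left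
      (hκ z hz)).and (ae_restrict_of_ae_restrict_of_subset inter_subset_right (hκ z' hz'))).exists
    rw [← hx, hx']
  obtain ⟨z₀, hz₀⟩ := hD_ne
  refine ⟨κ z₀, ?_⟩
  rw [ae_restrict_iff' hD_open.measurableSet, ae_iff]
  refine measure_null_of_locally_null _ fun x hx =>
    ⟨_, inter_mem_nhdsWithin _ (ball_mem_nhds x hδ), ?_⟩
  have hxD : x ∈ D := of_not_imp hx
  have := hκ x hxD
  rw [hD.apply_eq_of_forall_dist_lt hD_open hδ hκ_loc hz₀ hxD,
    ae_restrict_iff' (measurableSet_ball.inter hD_open.measurableSet), ae_iff] at this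
  refine measure_mono_null (fun y ⟨hy, hyB⟩ => ?_) this
  exact fun h => hy fun hyD => h ⟨hyB, hyD⟩

end DeltaConnected

/-- Right-hand side of the nonlocal equation on `S` with exterior datum `g` (the paper's `ū`). -/
noncomputable def nonlocalOperator {G : Type*} [MeasurableSpace G] [Sub G] (μ : Measure G)
    (J : G → ℝ) (S : Set G) (g v : G → ℝ) (x : G) : ℝ :=
  (∫ y in Sᶜ, J (x - y) * (g y - v x) ∂μ) + 2 * ∫ y in S, J (x - y) * (v y - v x) ∂μ

section Kernel

variable {G : Type*} [NormedAddCommGroup G] [MeasurableSpace G] [BorelSpace G]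
  {μ : Measure G} [μ.IsAddLeftInvariant] {J : G → ℝ} {M : ℝ} {S : Set G}

theorem integral_compl_comp_sub_eq (hJ_int : Integrable J μ) (hS : MeasurableSet S) (y : G) :
    ∫ x in Sᶜ, J (x - y) ∂μ = ∫ z, J z ∂μ - ∫ x in S, J (x - y) ∂μ := by
  rw [← integral_sub_right_eq_self J y, ← integral_add_compl hS (hJ_int.comp_sub_right y)]
  ring

theorem eventually_pos_integral_compl_comp_sub [μ.IsOpenPosMeasure] (hJ_nonneg : ∀ z, 0 ≤ J z)
    (hJ_int : Integrable J μ) {R : ℝ} (hJ_pos : ∀ z, ‖z‖ < R → 0 < J z) {U : Set G}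
    (hU : IsOpen U) (hUS : U ⊆ Sᶜ) {x₀ y₀ : G} (hx₀ : x₀ ∈ U) (hxy : dist x₀ y₀ < R) :
    ∀ᶠ y in 𝓝 y₀, 0 < ∫ x in Sᶜ, J (x - y) ∂μ := by
  have hr : 0 < (R - dist x₀ y₀) / 2 := by linarith
  filter_upwards [ball_mem_nhds y₀ hr] with y hy
  rw [setIntegral_pos_iff_support_of_nonneg_ae (ae_of_all _ fun _ => hJ_nonneg _)
    (hJ_int.comp_sub_right y).integrableOn]
  refine ((hU.inter isOpen_ball).measure_pos μ ⟨x₀, hx₀, mem_ball_self hr⟩).trans_le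
    (measure_mono fun x ⟨hxU, hx⟩ => ⟨(hJ_pos _ ?_).ne', hUS hxU⟩)
  rw [← dist_eq_norm]
  rw [mem_ball] at hx hy
  linarith [dist_triangle4 x x₀ y₀ y, dist_comm y y₀]

section NegInvariant

variable [μ.IsNegInvariant]

theorem aestronglyMeasurable_comp_sub_left (hJ : AEStronglyMeasurable J μ) (x : G) (T : Set G) :
    AEStronglyMeasurable (fun y => J (x - y)) (μ.restrict T) :=
  (hJ.comp_quasiMeasurePreserving
    (Measure.measurePreserving_sub_left μ x).quasiMeasurePreserving).restrict

theorem integrable_comp_sub_left_mul (hJ : AEStronglyMeasurable J μ) (hJ_bdd : ∀ z, ‖J z‖ ≤ M)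
    {T : Set G} {g : G → ℝ} (hg : Integrable g (μ.restrict T)) (x : G) :
    Integrable (fun y => J (x - y) * g y) (μ.restrict T) :=
  hg.bdd_mul (aestronglyMeasurable_comp_sub_left hJ x T) (ae_of_all _ fun _ => hJ_bdd _)

theorem nonlocalOperator_eq (hJ_int : Integrable J μ) (hJ_bdd : ∀ z, ‖J z‖ ≤ M) {g v : G → ℝ}
    (hg : Integrable g (μ.restrict Sᶜ)) (hv : Integrable v (μ.restrict S)) (x : G) :
    nonlocalOperator μ J S g v x =
      (∫ y in Sᶜ, J (x - y) * g y ∂μ) - (∫ y in Sᶜ, J (x - y) ∂μ) * v x +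
        2 * ((∫ y in S, J (x - y) * v y ∂μ) - (∫ y in S, J (x - y) ∂μ) * v x) := by
  have hJx := (hJ_int.comp_sub_left x).mul_const (v x)
  simp only [nonlocalOperator, mul_sub]
  rw [integral_sub (integrable_comp_sub_left_mul hJ_int.1 hJ_bdd hg x) hJx.integrableOn,
    integral_sub (integrable_comp_sub_left_mul hJ_int.1 hJ_bdd hv x) hJx.integrableOn,
    integral_mul_const, integral_mul_const]
  ring

theorem nonlocalOperator_sub_le (hJ_nonneg : ∀ z, 0 ≤ J z) (hJ_int : Integrable J μ)
    (hJ_bdd : ∀ z, ‖J z‖ ≤ M) {g₁ g₂ v₁ v₂ : G → ℝ} (hg₁ : Integrable g₁ (μ.restrict Sᶜ))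
    (hg₂ : Integrable g₂ (μ.restrict Sᶜ)) (hv₁ : Integrable v₁ (μ.restrict S))
    (hv₂ : Integrable v₂ (μ.restrict S)) (hg : g₁ ≤ᵐ[μ.restrict Sᶜ] g₂) (x : G) :
    nonlocalOperator μ J S g₁ v₁ x - nonlocalOperator μ J S g₂ v₂ x ≤
      nonlocalOperator μ J S 0 (v₁ - v₂) x := by
  have hg_int : ∫ y in Sᶜ, J (x - y) * g₁ y ∂μ ≤ ∫ y in Sᶜ, J (x - y) * g₂ y ∂μ :=
    integral_mono_ae (integrable_comp_sub_left_mul hJ_int.1 hJ_bdd hg₁ x)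
      (integrable_comp_sub_left_mul hJ_int.1 hJ_bdd hg₂ x)
      (hg.mono fun y hy => mul_le_mul_of_nonneg_left hy (hJ_nonneg _))
  rw [nonlocalOperator_eq hJ_int hJ_bdd hg₁ hv₁, nonlocalOperator_eq hJ_int hJ_bdd hg₂ hv₂,
    nonlocalOperator_eq hJ_int hJ_bdd (integrable_zero _ _ _) (hv₁.sub hv₂)]
  simp only [Pi.sub_apply, Pi.zero_apply, mul_zero, integral_zero, mul_sub]
  rw [integral_sub (integrable_comp_sub_left_mul hJ_int.1 hJ_bdd hv₁ x)
    (integrable_comp_sub_left_mul hJ_int.1 hJ_bdd hv₂ x)]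
  linarith

theorem sq_posPart_mul_le_of_nonlocalOperator_nonneg (hJ_nonneg : ∀ z, 0 ≤ J z)
    (hJ_int : Integrable J μ) (hJ_bdd : ∀ z, ‖J z‖ ≤ M) (hS : MeasurableSet S) {w : G → ℝ}
    (hw : Integrable w (μ.restrict S))
    (hL : ∀ᵐ x ∂μ.restrict S, 0 ≤ nonlocalOperator μ J S 0 w x) :
    ∀ᵐ x ∂μ.restrict S, max (w x) 0 ^ 2 * ((∫ z, J z ∂μ) + ∫ y in S, J (x - y) ∂μ) ≤
      max (w x) 0 * (2 * ∫ y in S, J (x - y) * max (w y) 0 ∂μ) := by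
  filter_upwards [hL] with x hx
  rw [nonlocalOperator_eq hJ_int hJ_bdd (integrable_zero _ _ _) hw] at hx
  simp only [Pi.zero_apply, mul_zero, integral_zero] at hx
  have hmass : (∫ y in Sᶜ, J (x - y) ∂μ) + ∫ y in S, J (x - y) ∂μ = ∫ z, J z ∂μ := by
    rw [add_comm, integral_add_compl hS (hJ_int.comp_sub_left x), integral_sub_left_eq_self]
  have hK : ∫ y in S, J (x - y) * w y ∂μ ≤ ∫ y in S, J (x - y) * max (w y) 0 ∂μ :=
    integral_mono (integrable_comp_sub_left_mul hJ_int.1 hJ_bdd hw x)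
      (integrable_comp_sub_left_mul hJ_int.1 hJ_bdd hw.pos_part x)
      fun y => mul_le_mul_of_nonneg_left (le_max_left _ _) (hJ_nonneg _)
  rcases le_total (w x) 0 with h | h
  · simp [max_eq_right h]
  · rw [max_eq_left h, ← hmass]
    nlinarith [mul_nonneg h hx, mul_le_mul_of_nonneg_left hK h]

end NegInvariant

section Prod

variable [SecondCountableTopology G] [SFinite μ]

theorem integrable_mul_comp_sub_mul_prod (hJ : AEStronglyMeasurable J μ)
    (hJ_bdd : ∀ z, ‖J z‖ ≤ M) {f g : G → ℝ} (hf : Integrable f (μ.restrict S))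
    (hg : Integrable g (μ.restrict S)) :
    Integrable (fun p : G × G => f p.1 * J (p.1 - p.2) * g p.2)
      ((μ.restrict S).prod (μ.restrict S)) := by
  have hJp : AEStronglyMeasurable (fun p : G × G => J (p.1 - p.2))
      ((μ.restrict S).prod (μ.restrict S)) := by
    rw [Measure.prod_restrict]
    exact (hJ.comp_quasiMeasurePreserving
      (quasiMeasurePreserving_sub_of_right_invariant μ μ)).restrict
  exact ((hf.mul_prod hg).bdd_mul hJp (ae_of_all _ fun _ => hJ_bdd _)).congr
    (ae_of_all _ fun p => by ring)

theorem integral_mul_comp_sub_mul_prod_eq_left (hJ : AEStronglyMeasurable J μ)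
    (hJ_bdd : ∀ z, ‖J z‖ ≤ M) {f g : G → ℝ} (hf : Integrable f (μ.restrict S))
    (hg : Integrable g (μ.restrict S)) :
    ∫ p, f p.1 * J (p.1 - p.2) * g p.2 ∂(μ.restrict S).prod (μ.restrict S) =
      ∫ x in S, f x * ∫ y in S, J (x - y) * g y ∂μ ∂μ := by
  rw [integral_prod _ (integrable_mul_comp_sub_mul_prod hJ hJ_bdd hf hg)]
  simp_rw [mul_assoc, integral_const_mul]

theorem integral_mul_comp_sub_mul_prod_eq_right (hJ : AEStronglyMeasurable J μ)
    (hJ_bdd : ∀ z, ‖J z‖ ≤ M) {f g : G → ℝ} (hf : Integrable f (μ.restrict S))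
    (hg : Integrable g (μ.restrict S)) :
    ∫ p, f p.1 * J (p.1 - p.2) * g p.2 ∂(μ.restrict S).prod (μ.restrict S) =
      ∫ y in S, (∫ x in S, f x * J (x - y) ∂μ) * g y ∂μ := by
  rw [integral_prod_symm _ (integrable_mul_comp_sub_mul_prod hJ hJ_bdd hf hg)]
  simp_rw [integral_mul_const]

theorem integrable_mul_integral_comp_sub_mul (hJ : AEStronglyMeasurable J μ)
    (hJ_bdd : ∀ z, ‖J z‖ ≤ M) {f g : G → ℝ} (hf : Integrable f (μ.restrict S))
    (hg : Integrable g (μ.restrict S)) :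
    Integrable (fun x => f x * ∫ y in S, J (x - y) * g y ∂μ) (μ.restrict S) := by
  simpa only [mul_assoc, integral_const_mul] using
    (integrable_mul_comp_sub_mul_prod hJ hJ_bdd hf hg).integral_prod_left

theorem integrable_integral_mul_comp_sub_mul (hJ : AEStronglyMeasurable J μ)
    (hJ_bdd : ∀ z, ‖J z‖ ≤ M) {f g : G → ℝ} (hf : Integrable f (μ.restrict S))
    (hg : Integrable g (μ.restrict S)) :
    Integrable (fun y => (∫ x in S, f x * J (x - y) ∂μ) * g y) (μ.restrict S) := by
  simpa only [integral_mul_const] using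
    (integrable_mul_comp_sub_mul_prod hJ hJ_bdd hf hg).integral_prod_right

theorem integrable_comp_sub_mul_sq_sub (hJ : AEStronglyMeasurable J μ)
    (hJ_bdd : ∀ z, ‖J z‖ ≤ M) [IsFiniteMeasure (μ.restrict S)] {W : G → ℝ}
    (hW : MemLp W 2 (μ.restrict S)) :
    Integrable (fun p : G × G => J (p.1 - p.2) * (W p.1 - W p.2) ^ 2)
      ((μ.restrict S).prod (μ.restrict S)) := by
  have h₁ := integrable_mul_comp_sub_mul_prod hJ hJ_bdd hW.integrable_sq (integrable_const 1)
  have h₂ := integrable_mul_comp_sub_mul_prod hJ hJ_bdd (integrable_const 1) hW.integrable_sq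
  have h₃ := integrable_mul_comp_sub_mul_prod hJ hJ_bdd (hW.integrable one_le_two)
    (hW.integrable one_le_two)
  exact ((h₁.add h₂).sub (h₃.const_mul 2)).congr
    (ae_of_all _ fun p => by simp only [Pi.add_apply, Pi.sub_apply]; ring)

theorem integral_comp_sub_mul_sq_sub_eq (hJ : AEStronglyMeasurable J μ)
    (hJ_bdd : ∀ z, ‖J z‖ ≤ M) [IsFiniteMeasure (μ.restrict S)] {W : G → ℝ}
    (hW : MemLp W 2 (μ.restrict S)) :
    ∫ p, J (p.1 - p.2) * (W p.1 - W p.2) ^ 2 ∂(μ.restrict S).prod (μ.restrict S) =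
      (∫ x in S, W x ^ 2 * ∫ y in S, J (x - y) ∂μ ∂μ) +
        (∫ y in S, (∫ x in S, J (x - y) ∂μ) * W y ^ 2 ∂μ) -
        2 * ∫ x in S, W x * ∫ y in S, J (x - y) * W y ∂μ ∂μ := by
  have hW₁ := hW.integrable one_le_two
  have h1 : Integrable (fun _ : G => (1 : ℝ)) (μ.restrict S) := integrable_const 1
  have hi₁ := integrable_mul_comp_sub_mul_prod hJ hJ_bdd hW.integrable_sq h1
  have hi₂ := integrable_mul_comp_sub_mul_prod hJ hJ_bdd h1 hW.integrable_sq
  have hi₃ := integrable_mul_comp_sub_mul_prod hJ hJ_bdd hW₁ hW₁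
  have hP₁ := integral_mul_comp_sub_mul_prod_eq_left hJ hJ_bdd hW.integrable_sq h1
  have hP₂ := integral_mul_comp_sub_mul_prod_eq_right hJ hJ_bdd h1 hW.integrable_sq
  simp only [mul_one, one_mul] at hi₁ hi₂ hP₁ hP₂
  rw [← hP₁, ← hP₂, ← integral_mul_comp_sub_mul_prod_eq_left hJ hJ_bdd hW₁ hW₁,
    ← integral_const_mul, ← integral_add hi₁ hi₂, ← integral_sub _ (hi₃.const_mul 2)]
  · exact integral_congr_ae (ae_of_all _ fun p => by ring)
  · exact hi₁.add hi₂

theorem integral_sq_mul_sub_mul_integral_eq (hJ_int : Integrable J μ)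
    (hJ_bdd : ∀ z, ‖J z‖ ≤ M) (hS : MeasurableSet S) [IsFiniteMeasure (μ.restrict S)]
    {W : G → ℝ} (hW : MemLp W 2 (μ.restrict S)) :
    ∫ x in S, (W x ^ 2 * ((∫ z, J z ∂μ) + ∫ y in S, J (x - y) ∂μ) -
        W x * (2 * ∫ y in S, J (x - y) * W y ∂μ)) ∂μ =
      (∫ p, J (p.1 - p.2) * (W p.1 - W p.2) ^ 2 ∂(μ.restrict S).prod (μ.restrict S)) +
        ∫ y in S, (∫ x in Sᶜ, J (x - y) ∂μ) * W y ^ 2 ∂μ := by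
  have hW₁ := hW.integrable one_le_two
  have hW₂ := hW.integrable_sq
  have h1 : Integrable (fun _ : G => (1 : ℝ)) (μ.restrict S) := integrable_const 1
  have hm₁ := integrable_mul_integral_comp_sub_mul hJ_int.1 hJ_bdd hW₂ h1
  have hm₂ := integrable_integral_mul_comp_sub_mul hJ_int.1 hJ_bdd h1 hW₂
  have hm₃ := integrable_mul_integral_comp_sub_mul hJ_int.1 hJ_bdd hW₁ hW₁
  simp only [mul_one, one_mul] at hm₁ hm₂
  have hX : ∫ y in S, (∫ x in Sᶜ, J (x - y) ∂μ) * W y ^ 2 ∂μ =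
      (∫ z, J z ∂μ) * (∫ y in S, W y ^ 2 ∂μ) -
        ∫ y in S, (∫ x in S, J (x - y) ∂μ) * W y ^ 2 ∂μ := by
    rw [← integral_const_mul, ← integral_sub (hW₂.const_mul _) hm₂]
    exact integral_congr_ae (ae_of_all _ fun y => by
      simp only [integral_compl_comp_sub_eq hJ_int hS y]; ring)
  have hL : ∫ x in S, (W x ^ 2 * ((∫ z, J z ∂μ) + ∫ y in S, J (x - y) ∂μ) -
      W x * (2 * ∫ y in S, J (x - y) * W y ∂μ)) ∂μ =
      ∫ x in S, ((∫ z, J z ∂μ) * W x ^ 2 + W x ^ 2 * ∫ y in S, J (x - y) ∂μ) -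
        2 * (W x * ∫ y in S, J (x - y) * W y ∂μ) ∂μ :=
    integral_congr_ae (ae_of_all _ fun x => by ring)
  rw [hL, hX, integral_comp_sub_mul_sq_sub_eq hJ_int.1 hJ_bdd hW, integral_sub _ (hm₃.const_mul 2),
    integral_add (hW₂.const_mul _) hm₁, integral_const_mul, integral_const_mul]
  · ring
  · exact (hW₂.const_mul _).add hm₁

theorem ae_eq_zero_of_sq_mul_le (hJ_nonneg : ∀ z, 0 ≤ J z) (hJ_int : Integrable J μ)
    (hJ_bdd : ∀ z, ‖J z‖ ≤ M) (hS : MeasurableSet S) [IsFiniteMeasure (μ.restrict S)]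
    {W : G → ℝ} (hW : MemLp W 2 (μ.restrict S))
    (h : ∀ᵐ x ∂μ.restrict S, W x ^ 2 * ((∫ z, J z ∂μ) + ∫ y in S, J (x - y) ∂μ) ≤
      W x * (2 * ∫ y in S, J (x - y) * W y ∂μ)) :
    (∀ᵐ p ∂(μ.restrict S).prod (μ.restrict S), J (p.1 - p.2) * (W p.1 - W p.2) ^ 2 = 0) ∧
      ∀ᵐ y ∂μ.restrict S, (∫ x in Sᶜ, J (x - y) ∂μ) * W y ^ 2 = 0 := by
  have hle := integral_nonpos_of_ae (h.mono fun x hx => sub_nonpos.2 hx)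
  rw [integral_sq_mul_sub_mul_integral_eq hJ_int hJ_bdd hS hW] at hle
  have hQ_nonneg : ∀ p : G × G, 0 ≤ J (p.1 - p.2) * (W p.1 - W p.2) ^ 2 :=
    fun p => mul_nonneg (hJ_nonneg _) (sq_nonneg _)
  have hX_nonneg : ∀ y, 0 ≤ (∫ x in Sᶜ, J (x - y) ∂μ) * W y ^ 2 :=
    fun y => mul_nonneg (integral_nonneg fun _ => hJ_nonneg _) (sq_nonneg _)
  have hX_int : Integrable (fun y => (∫ x in Sᶜ, J (x - y) ∂μ) * W y ^ 2) (μ.restrict S) := by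
    have := integrable_integral_mul_comp_sub_mul hJ_int.1 hJ_bdd (integrable_const 1)
      hW.integrable_sq
    refine ((hW.integrable_sq.const_mul (∫ z, J z ∂μ)).sub this).congr (ae_of_all _ fun y => ?_)
    simp only [Pi.sub_apply, one_mul, integral_compl_comp_sub_eq hJ_int hS y]
    ring
  have hQ : 0 ≤ ∫ p, J (p.1 - p.2) * (W p.1 - W p.2) ^ 2 ∂(μ.restrict S).prod (μ.restrict S) :=
    integral_nonneg hQ_nonneg
  have hX : 0 ≤ ∫ y in S, (∫ x in Sᶜ, J (x - y) ∂μ) * W y ^ 2 ∂μ := integral_nonneg hX_nonneg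
  exact ⟨(integral_eq_zero_iff_of_nonneg hQ_nonneg
      (integrable_comp_sub_mul_sq_sub hJ_int.1 hJ_bdd hW)).1 (by linarith),
    (integral_eq_zero_iff_of_nonneg hX_nonneg hX_int).1 (by linarith)⟩

end Prod

end Kernel

theorem DeltaConnected.ae_nonpos_of_nonlocalOperator_nonneg {N : ℕ} {δ : ℝ}
    {S : Set (EuclideanSpace ℝ (Fin N))} (hS_conn : DeltaConnected δ S) (hS_open : IsOpen S)
    (hδ : 0 < δ) (hS_fin : volume S ≠ ∞) {J : EuclideanSpace ℝ (Fin N) → ℝ} {M : ℝ}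
    (hJ_nonneg : ∀ z, 0 ≤ J z) (hJ_int : Integrable J) (hJ_bdd : ∀ z, ‖J z‖ ≤ M)
    (hJ_pos : ∀ z, ‖z‖ < 2 * δ → 0 < J z) {y₀ : EuclideanSpace ℝ (Fin N)} (hy₀ : y₀ ∈ S)
    (hext : ∀ᶠ y in 𝓝 y₀, 0 < ∫ x in Sᶜ, J (x - y)) {w : EuclideanSpace ℝ (Fin N) → ℝ}
    (hw : MemLp w 2 (volume.restrict S))
    (hL : ∀ᵐ x ∂volume.restrict S, 0 ≤ nonlocalOperator volume J S 0 w x) :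
    ∀ᵐ x ∂volume.restrict S, w x ≤ 0 := by
  have := isFiniteMeasure_restrict.2 hS_fin
  obtain ⟨hQ, hX⟩ := ae_eq_zero_of_sq_mul_le hJ_nonneg hJ_int hJ_bdd hS_open.measurableSet
    hw.pos_part (sq_posPart_mul_le_of_nonlocalOperator_nonneg hJ_nonneg hJ_int hJ_bdd
      hS_open.measurableSet (hw.integrable one_le_two) hL)
  have hpair : ∀ᵐ p ∂(volume.restrict S).prod (volume.restrict S),
      dist p.1 p.2 < 2 * δ → max (w p.1) 0 = max (w p.2) 0 := by
    filter_upwards [hQ] with p hp hd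
    have := hJ_pos _ (by rwa [← dist_eq_norm])
    simpa [this.ne', sub_eq_zero] using hp
  obtain ⟨k, hk⟩ :=
    hS_conn.exists_ae_eq_const hS_open hδ ⟨y₀, hy₀⟩ (W := fun x => max (w x) 0) hpair
  obtain ⟨y, ⟨hy0, hyk⟩, hypos⟩ :=
    exists_of_ae_restrict_of_eventually_nhds hS_open hy₀ (hX.and hk) hext
  have hk0 : k = 0 := by simpa [hyk, hypos.ne'] using hy0
  filter_upwards [hk] with x hx
  exact max_eq_right_iff.1 (hx.trans hk0)

theorem nonlocal_monotone_dependence_general {N : ℕ} (δ : ℝ) (hδ : 0 < δ)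
    (Ωl Ωnl : Set (EuclideanSpace ℝ (Fin N)))
    (hΩl_open : IsOpen Ωl) (hΩl_bdd : Bornology.IsBounded Ωl)
    (hΩnl_open : IsOpen Ωnl) (hΩnl_bdd : Bornology.IsBounded Ωnl)
    (hdisj : Ωl ∩ Ωnl = ∅)
    (hΩnl_conn : DeltaConnected δ Ωnl)
    (hP1 : ∃ x ∈ Ωl, ∃ y ∈ Ωnl, dist x y < δ)
    (J : EuclideanSpace ℝ (Fin N) → ℝ)
    (hJ_nonneg : ∀ z, 0 ≤ J z)
    (hJ_bdd : ∃ M : ℝ, ∀ z, J z ≤ M)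
    (hJ_int : Integrable J)
    (hJ1 : ∃ c > (0 : ℝ), ∀ z, ‖z‖ ≤ 2 * δ → c ≤ J z)
    (f₁ f₂ : EuclideanSpace ℝ (Fin N) → ℝ)
    (hf : ∀ᵐ x ∂(volume.restrict Ωnl), f₁ x ≤ f₂ x)
    (u₁ u₂ : EuclideanSpace ℝ (Fin N) → ℝ)
    (hu₁ : MemLp u₁ 2 (volume.restrict Ωl)) (hu₂ : MemLp u₂ 2 (volume.restrict Ωl))
    (hu : ∀ᵐ x ∂(volume.restrict Ωl), u₁ x ≤ u₂ x)
    (v₁ v₂ : EuclideanSpace ℝ (Fin N) → ℝ)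
    (hv₁ : MemLp v₁ 2 (volume.restrict Ωnl)) (hv₂ : MemLp v₂ 2 (volume.restrict Ωnl))
    (hsol₁ : ∀ᵐ x ∂(volume.restrict Ωnl),
      -f₁ x = (∫ y in Ωnlᶜ, J (x - y) * (Set.indicator Ωl u₁ y - v₁ x)) +
        2 * ∫ y in Ωnl, J (x - y) * (v₁ y - v₁ x))
    (hsol₂ : ∀ᵐ x ∂(volume.restrict Ωnl),
      -f₂ x = (∫ y in Ωnlᶜ, J (x - y) * (Set.indicator Ωl u₂ y - v₂ x)) +
        2 * ∫ y in Ωnl, J (x - y) * (v₂ y - v₂ x)) :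
    ∀ᵐ x ∂(volume.restrict Ωnl), v₁ x ≤ v₂ x := by
  have : IsFiniteMeasure (volume.restrict Ωl) :=
    isFiniteMeasure_restrict.2 hΩl_bdd.measure_lt_top.ne
  have : IsFiniteMeasure (volume.restrict Ωnl) :=
    isFiniteMeasure_restrict.2 hΩnl_bdd.measure_lt_top.ne
  obtain ⟨M, hM⟩ := hJ_bdd
  have hJ_norm : ∀ z, ‖J z‖ ≤ M := fun z => (Real.norm_of_nonneg (hJ_nonneg z)).trans_le (hM z)
  obtain ⟨c, hc, hJc⟩ := hJ1
  have hJ_pos : ∀ z, ‖z‖ < 2 * δ → 0 < J z := fun z hz => hc.trans_le (hJc z hz.le)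
  obtain ⟨x₀, hx₀, y₀, hy₀, hxy₀⟩ := hP1
  have hg : ∀ u : EuclideanSpace ℝ (Fin N) → ℝ, MemLp u 2 (volume.restrict Ωl) →
      Integrable (Ωl.indicator u) (volume.restrict Ωnlᶜ) :=
    fun u hu =>
      ((integrable_indicator_iff hΩl_open.measurableSet).2 (hu.integrable one_le_two)).restrict
  have hg_le : Ωl.indicator u₁ ≤ᵐ[volume.restrict Ωnlᶜ] Ωl.indicator u₂ := by
    filter_upwards [ae_restrict_of_ae ((ae_restrict_iff' hΩl_open.measurableSet).1 hu)] with y hy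
    exact indicator_le_indicator' hy
  have hL : ∀ᵐ x ∂volume.restrict Ωnl, 0 ≤ nonlocalOperator volume J Ωnl 0 (v₁ - v₂) x := by
    filter_upwards [hsol₁, hsol₂, hf] with x h₁ h₂ hfx
    have h₁' : -f₁ x = nonlocalOperator volume J Ωnl (Ωl.indicator u₁) v₁ x := h₁
    have h₂' : -f₂ x = nonlocalOperator volume J Ωnl (Ωl.indicator u₂) v₂ x := h₂
    linarith [nonlocalOperator_sub_le hJ_nonneg hJ_int hJ_norm (hg u₁ hu₁) (hg u₂ hu₂)
      (hv₁.integrable one_le_two) (hv₂.integrable one_le_two) hg_le x]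
  have hext := eventually_pos_integral_compl_comp_sub hJ_nonneg hJ_int hJ_pos hΩl_open
    (disjoint_iff_inter_eq_empty.2 hdisj).subset_compl_right hx₀ (by linarith)
  filter_upwards [hΩnl_conn.ae_nonpos_of_nonlocalOperator_nonneg hΩnl_open hδ
    hΩnl_bdd.measure_lt_top.ne hJ_nonneg hJ_int hJ_norm hJ_pos hy₀ hext (hv₁.sub hv₂) hL] with x hx
  exact sub_nonpos.1 hx

/-- Monotone dependence on the data: if `f₁ ≤ f₂` and `u₁ ≤ u₂`, then the corresponding
solutions of the nonlocal problem satisfy `v₁ ≤ v₂` a.e. in `Ω_{nℓ}`. -/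
theorem nonlocal_monotone_dependence {N : ℕ} (δ : ℝ) (hδ : 0 < δ)
    (Ωl Ωnl : Set (EuclideanSpace ℝ (Fin N)))
    (hΩl_open : IsOpen Ωl) (hΩl_bdd : Bornology.IsBounded Ωl)
    (hΩnl_open : IsOpen Ωnl) (hΩnl_bdd : Bornology.IsBounded Ωnl)
    (hdisj : Ωl ∩ Ωnl = ∅)
    (hΩnl_conn : DeltaConnected δ Ωnl)
    (hP1 : ∃ x ∈ Ωl, ∃ y ∈ Ωnl, dist x y < δ)
    (J : EuclideanSpace ℝ (Fin N) → ℝ)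
    (hJ_nonneg : ∀ z, 0 ≤ J z)
    (hJ_symm : ∀ z, J (-z) = J z)
    (hJ_bdd : ∃ M : ℝ, ∀ z, J z ≤ M)
    (hJ_int : Integrable J)
    (hJ1 : ∃ c > (0 : ℝ), ∀ z, ‖z‖ ≤ 2 * δ → c ≤ J z)
    (hJ2 : ∃ K : Lp ℝ 2 (volume.restrict Ωnl) →L[ℝ] Lp ℝ 2 (volume.restrict Ωnl),
      IsCompactOperator K ∧ ∀ w : Lp ℝ 2 (volume.restrict Ωnl),
        ∀ᵐ x ∂(volume.restrict Ωnl), K w x = ∫ y in Ωnl, J (x - y) * w y)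
    (f₁ f₂ : EuclideanSpace ℝ (Fin N) → ℝ)
    (hf₁ : MemLp f₁ 2 (volume.restrict Ωnl)) (hf₂ : MemLp f₂ 2 (volume.restrict Ωnl))
    (hf : ∀ᵐ x ∂(volume.restrict Ωnl), f₁ x ≤ f₂ x)
    (u₁ u₂ : EuclideanSpace ℝ (Fin N) → ℝ)
    (hu₁ : MemLp u₁ 2 (volume.restrict Ωl)) (hu₂ : MemLp u₂ 2 (volume.restrict Ωl))
    (hu : ∀ᵐ x ∂(volume.restrict Ωl), u₁ x ≤ u₂ x)
    (v₁ v₂ : EuclideanSpace ℝ (Fin N) → ℝ)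
    (hv₁ : MemLp v₁ 2 (volume.restrict Ωnl)) (hv₂ : MemLp v₂ 2 (volume.restrict Ωnl))
    (hsol₁ : ∀ᵐ x ∂(volume.restrict Ωnl),
      -f₁ x = (∫ y in Ωnlᶜ, J (x - y) * (Set.indicator Ωl u₁ y - v₁ x)) +
        2 * ∫ y in Ωnl, J (x - y) * (v₁ y - v₁ x))
    (hsol₂ : ∀ᵐ x ∂(volume.restrict Ωnl),
      -f₂ x = (∫ y in Ωnlᶜ, J (x - y) * (Set.indicator Ωl u₂ y - v₂ x)) +
        2 * ∫ y in Ωnl, J (x - y) * (v₂ y - v₂ x)) :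
    ∀ᵐ x ∂(volume.restrict Ωnl), v₁ x ≤ v₂ x :=
  nonlocal_monotone_dependence_general δ hδ Ωl Ωnl hΩl_open hΩl_bdd hΩnl_open hΩnl_bdd hdisj
    hΩnl_conn hP1 J hJ_nonneg hJ_bdd hJ_int hJ1 f₁ f₂ hf u₁ u₂ hu₁ hu₂ hu v₁ v₂ hv₁ hv₂ hsol₁ hsol₂
end

section
/- Let H be a real Hilbert space and let V₁, V₂ be closed subspaces with V₁ ∩ V₂ = {0} and V₁ + V₂ = H. Let Q₁ and Q₂ denote the orthogonal projections onto the orthogonal complements V₁^⊥ and V₂^⊥ respectively. Then there exists δ ∈ [0, 1) such that ‖Q₁(Q₂ x)‖ ≤ δ ‖x‖ for every x ∈ H; consequently, for every x ∈ H and every n ∈ ℕ, ‖(Q₁ ∘ Q₂)^n x‖ ≤ δ^n ‖x‖, so the alternating iterates converge geometrically to 0. -/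
open Submodule RealInnerProductSpace

/-! Closed complementary subspaces `V₁ ⊕ V₂ = H` come with a bounded projection onto `V₁` along
`V₂` (closed graph theorem), of norm at most `C` say. For `y ∈ V₂ᗮ` and `p ∈ V₁ᗮ`, splitting
`y = w + (y - w)` with this projection gives `‖y‖² = ⟪y - p, w⟫ ≤ C ‖y - p‖ ‖y‖`, so `V₂ᗮ` keeps a
positive angle from `V₁ᗮ`: `‖y - p‖ ≥ ‖y‖ / C`. By Pythagoras, `‖Q₁ y‖² ≤ (1 - C⁻²) ‖y‖²` on
`V₂ᗮ`, and `Q₂` maps into `V₂ᗮ` without increasing norms. -/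

section OrthogonalSplitting

variable {E : Type*} [NormedAddCommGroup E] [InnerProductSpace ℝ E] {K : Submodule ℝ E} {x p : E}

theorem norm_sq_eq_norm_sub_sq_add_norm_sq_of_mem_orthogonal (hp : p ∈ Kᗮ) (hxp : x - p ∈ K) :
    ‖x‖ ^ 2 = ‖x - p‖ ^ 2 + ‖p‖ ^ 2 := by
  have h := norm_add_sq_eq_norm_sq_add_norm_sq_real (inner_right_of_mem_orthogonal hxp hp)
  rw [sub_add_cancel] at h
  simpa only [sq] using h

theorem norm_le_of_mem_orthogonal_of_sub_mem (hp : p ∈ Kᗮ) (hxp : x - p ∈ K) : ‖p‖ ≤ ‖x‖ := by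
  have := norm_sq_eq_norm_sub_sq_add_norm_sq_of_mem_orthogonal hp hxp
  nlinarith [norm_nonneg x, norm_nonneg p, sq_nonneg ‖x - p‖]

theorem norm_le_sqrt_one_sub_sq_mul_norm_of_mem_orthogonal {c : ℝ} (hc : 0 ≤ c) (hp : p ∈ Kᗮ)
    (hxp : x - p ∈ K) (hdist : c * ‖x‖ ≤ ‖x - p‖) : ‖p‖ ≤ √(1 - c ^ 2) * ‖x‖ := by
  have hpyth := norm_sq_eq_norm_sub_sq_add_norm_sq_of_mem_orthogonal hp hxp
  have hsq : (c * ‖x‖) ^ 2 ≤ ‖x - p‖ ^ 2 := pow_le_pow_left₀ (by positivity) hdist 2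
  rw [← Real.sqrt_sq (norm_nonneg x), ← Real.sqrt_mul' _ (sq_nonneg _), Real.le_sqrt (norm_nonneg p) (by nlinarith)]
  nlinarith

end OrthogonalSplitting

theorem norm_le_mul_norm_sub_of_mem_orthogonal {E : Type*} [NormedAddCommGroup E]
    [InnerProductSpace ℝ E] {V₁ V₂ : Submodule ℝ E} {y w p : E} {C : ℝ} (hC : 0 ≤ C)
    (hy : y ∈ V₂ᗮ) (hw : w ∈ V₁) (hyw : y - w ∈ V₂) (hwC : ‖w‖ ≤ C * ‖y‖) (hp : p ∈ V₁ᗮ) :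
    ‖y‖ ≤ C * ‖y - p‖ := by
  have hinner : ‖y‖ ^ 2 = ⟪y - p, w⟫ := by
    rw [← real_inner_self_eq_norm_sq, inner_sub_left, inner_left_of_mem_orthogonal hw hp,
      sub_zero]
    have := inner_left_of_mem_orthogonal hyw hy
    rw [inner_sub_right] at this
    linarith
  have hle : ‖y‖ ^ 2 ≤ ‖y - p‖ * (C * ‖y‖) :=
    hinner ▸ (real_inner_le_norm _ _).trans (by gcongr)
  rcases (norm_nonneg y).eq_or_lt with hy0 | hy0
  · rw [← hy0]; positivity
  · nlinarith

theorem exists_pos_mul_norm_le_norm_sub_of_isCompl {E : Type*} [NormedAddCommGroup E]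
    [InnerProductSpace ℝ E] [CompleteSpace E] {V₁ V₂ : Submodule ℝ E} (h : IsCompl V₁ V₂)
    (hV₁ : IsClosed (V₁ : Set E)) (hV₂ : IsClosed (V₂ : Set E)) :
    ∃ c > 0, ∀ y ∈ V₂ᗮ, ∀ p ∈ V₁ᗮ, c * ‖y‖ ≤ ‖y - p‖ := by
  have hV := h.isTopCompl_of_isClosed hV₁ hV₂
  set P := V₁.projectionL V₂ hV
  have hC : 0 < ‖P‖ + 1 := by positivity
  refine ⟨(‖P‖ + 1)⁻¹, inv_pos.2 hC, fun y hy p hp ↦ ?_⟩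
  have hyP : y - P y ∈ V₂ := projectionL_eq_self_sub_projectionL hV y ▸ projectionL_apply_mem _ y
  have hPy : ‖P y‖ ≤ (‖P‖ + 1) * ‖y‖ :=
    (P.le_opNorm y).trans (by gcongr; linarith)
  rw [inv_mul_le_iff₀ hC]
  exact norm_le_mul_norm_sub_of_mem_orthogonal hC.le hy (projectionL_apply_mem hV y) hyP hPy hp

theorem norm_iterate_le_pow_mul_norm {E : Type*} [SeminormedAddGroup E] {f : E → E} {δ : ℝ}
    (hδ : 0 ≤ δ) (hf : ∀ x, ‖f x‖ ≤ δ * ‖x‖) (x : E) (n : ℕ) : ‖f^[n] x‖ ≤ δ ^ n * ‖x‖ := by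
  induction n with
  | zero => simp
  | succ n ih =>
    rw [Function.iterate_succ_apply', pow_succ', mul_assoc]
    exact (hf _).trans (by gcongr)

/-- Lions's geometric convergence for the alternating Schwarz method: if `V₁, V₂` are closed
subspaces of a real Hilbert space with `V₁ ∩ V₂ = {0}` and `V₁ + V₂ = H`, and `Q₁, Q₂` are
the orthogonal projections onto `V₁ᗮ` and `V₂ᗮ`, then `Q₁ ∘ Q₂` is a contraction with some
factor `δ < 1`, and consequently the alternating iterates tend to `0` geometrically. -/
theorem schwarz_alternating_geometric_convergence
    {H : Type*} [NormedAddCommGroup H] [InnerProductSpace ℝ H] [CompleteSpace H]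
    (V₁ V₂ : Submodule ℝ H)
    (hV₁ : IsClosed (V₁ : Set H)) (hV₂ : IsClosed (V₂ : Set H))
    (hinf : V₁ ⊓ V₂ = ⊥) (hsup : V₁ ⊔ V₂ = ⊤)
    (Q₁ Q₂ : H → H)
    (hQ₁ : ∀ x, Q₁ x ∈ V₁ᗮ ∧ x - Q₁ x ∈ V₁)
    (hQ₂ : ∀ x, Q₂ x ∈ V₂ᗮ ∧ x - Q₂ x ∈ V₂) :
    ∃ δ : ℝ, 0 ≤ δ ∧ δ < 1 ∧ (∀ x : H, ‖Q₁ (Q₂ x)‖ ≤ δ * ‖x‖) ∧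
      ∀ (x : H) (n : ℕ), ‖(Q₁ ∘ Q₂)^[n] x‖ ≤ δ ^ n * ‖x‖ := by
  obtain ⟨c, hc, hangle⟩ := exists_pos_mul_norm_le_norm_sub_of_isCompl
    ⟨disjoint_iff.2 hinf, codisjoint_iff.2 hsup⟩ hV₁ hV₂
  have hδ : √(1 - c ^ 2) < 1 := (Real.sqrt_lt' one_pos).2 (by nlinarith)
  have hcontract : ∀ x, ‖Q₁ (Q₂ x)‖ ≤ √(1 - c ^ 2) * ‖x‖ := fun x ↦ calc
    ‖Q₁ (Q₂ x)‖ ≤ √(1 - c ^ 2) * ‖Q₂ x‖ :=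
      norm_le_sqrt_one_sub_sq_mul_norm_of_mem_orthogonal hc.le (hQ₁ _).1 (hQ₁ _).2
        (hangle _ (hQ₂ x).1 _ (hQ₁ _).1)
    _ ≤ √(1 - c ^ 2) * ‖x‖ := by
      gcongr; exact norm_le_of_mem_orthogonal_of_sub_mem (hQ₂ x).1 (hQ₂ x).2
  exact ⟨_, Real.sqrt_nonneg _, hδ, hcontract,
    norm_iterate_le_pow_mul_norm (Real.sqrt_nonneg _) hcontract⟩
end

section
/- Let H be a real Hilbert space and let V₁, V₂ be closed subspaces such that V₁ + V₂ is dense in H. Let Q₁ and Q₂ denote the orthogonal projections onto V₁^⊥ and V₂^⊥ respectively. Then for every x ∈ H the sequence (Q₁ ∘ Q₂)^n x converges to 0 in norm as n → ∞. -/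
/-!
Let `Pᵢ` be the orthogonal projection onto `Vᵢᗮ`, `A = P₁ P₂` and `T = A†A`. Then `T` is symmetric
with `‖Tu‖² ≤ ⟪Tu, u⟫` (i.e. `T² ≤ T`), so the moments `c k = ⟪Tᵏx, x⟫` are nonnegative and
decreasing, hence converge to some `L`. As `‖Tⁿx - Tᵐx‖² = c (2n) - 2 c (n + m) + c (2m)` tends to
`L - 2L + L = 0`, the sequence `Tⁿx` is Cauchy; its limit `z` is fixed by `T`, so `‖Az‖ = ‖z‖`,
which for a product of two projections forces `z ∈ V₁ᗮ ⊓ V₂ᗮ = (V₁ ⊔ V₂)ᗮ = 0`.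
Finally `A T = A²` gives `Aⁿ⁺¹ = A Tⁿ`, so `Aⁿ⁺¹x → A 0 = 0`.
-/

open Submodule Filter Topology
open scoped InnerProductSpace InnerProduct

namespace ContinuousLinearMap

variable {𝕜 E F : Type*} [RCLike 𝕜] [NormedAddCommGroup E] [InnerProductSpace 𝕜 E]
  [NormedAddCommGroup F] [InnerProductSpace 𝕜 F]

open RCLike

section Moments

variable {T : E →L[𝕜] E}

theorem norm_apply_le_of_norm_sq_le_re_inner (hT₁ : ∀ u, ‖T u‖ ^ 2 ≤ re ⟪T u, u⟫_𝕜) (u : E) :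
    ‖T u‖ ≤ ‖u‖ := by
  have h := (hT₁ u).trans (re_inner_le_norm (T u) u)
  nlinarith [norm_nonneg (T u), norm_nonneg u]

variable (hT : T.IsSymmetric)
include hT

theorem inner_pow_add_apply (x : E) (m n : ℕ) :
    ⟪(T ^ (m + n)) x, x⟫_𝕜 = ⟪(T ^ m) x, (T ^ n) x⟫_𝕜 := by
  rw [add_comm, pow_add, mul_apply_eq_comp]
  simpa [← toLinearMap_pow] using hT.pow n ((T ^ m) x) x

theorem re_inner_pow_two_mul_apply (x : E) (j : ℕ) :
    re ⟪(T ^ (2 * j)) x, x⟫_𝕜 = ‖(T ^ j) x‖ ^ 2 := by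
  rw [two_mul, inner_pow_add_apply hT, inner_self_eq_norm_sq]

theorem inner_pow_two_mul_add_one_apply (x : E) (j : ℕ) :
    ⟪(T ^ (2 * j + 1)) x, x⟫_𝕜 = ⟪T ((T ^ j) x), (T ^ j) x⟫_𝕜 := by
  rw [two_mul, add_right_comm, inner_pow_add_apply hT, pow_succ', mul_apply_eq_comp]

theorem norm_pow_apply_sub_pow_apply_sq (x : E) (m n : ℕ) :
    ‖(T ^ m) x - (T ^ n) x‖ ^ 2 =
      re ⟪(T ^ (m + m)) x, x⟫_𝕜 - 2 * re ⟪(T ^ (m + n)) x, x⟫_𝕜 + re ⟪(T ^ (n + n)) x, x⟫_𝕜 := by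
  rw [@norm_sub_sq 𝕜]
  simp only [inner_pow_add_apply hT, inner_self_eq_norm_sq]

variable (hT₁ : ∀ u, ‖T u‖ ^ 2 ≤ re ⟪T u, u⟫_𝕜)
include hT₁

theorem re_inner_pow_apply_nonneg (x : E) (k : ℕ) : 0 ≤ re ⟪(T ^ k) x, x⟫_𝕜 := by
  obtain ⟨j, rfl | rfl⟩ := Nat.even_or_odd' k
  · rw [re_inner_pow_two_mul_apply hT]
    positivity
  · rw [inner_pow_two_mul_add_one_apply hT]
    exact (sq_nonneg _).trans (hT₁ _)

theorem antitone_re_inner_pow_apply (x : E) : Antitone fun k ↦ re ⟪(T ^ k) x, x⟫_𝕜 := by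
  refine antitone_nat_of_succ_le fun k ↦ ?_
  obtain ⟨j, rfl | rfl⟩ := Nat.even_or_odd' k
  · rw [inner_pow_two_mul_add_one_apply hT, re_inner_pow_two_mul_apply hT]
    calc re ⟪T ((T ^ j) x), (T ^ j) x⟫_𝕜 ≤ ‖T ((T ^ j) x)‖ * ‖(T ^ j) x‖ := re_inner_le_norm _ _
      _ ≤ ‖(T ^ j) x‖ ^ 2 := by
        rw [sq]; gcongr; exact norm_apply_le_of_norm_sq_le_re_inner hT₁ _
  · rw [show 2 * j + 1 + 1 = 2 * (j + 1) by ring, re_inner_pow_two_mul_apply hT,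
      inner_pow_two_mul_add_one_apply hT, pow_succ' T j, mul_apply_eq_comp]
    exact hT₁ _

theorem cauchySeq_pow_apply (x : E) : CauchySeq fun n ↦ (T ^ n) x := by
  set c : ℕ → ℝ := fun k ↦ re ⟪(T ^ k) x, x⟫_𝕜
  obtain ⟨L, hc⟩ : ∃ L, Tendsto c atTop (𝓝 L) :=
    ⟨_, tendsto_atTop_ciInf (antitone_re_inner_pow_apply hT hT₁ x)
      ⟨0, Set.forall_mem_range.2 (re_inner_pow_apply_nonneg hT hT₁ x)⟩⟩
  rw [cauchySeq_iff_tendsto_dist_atTop_0, ← prod_atTop_atTop_eq]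
  have h₁ : Tendsto (fun p : ℕ × ℕ ↦ p.1) (atTop ×ˢ atTop) atTop := tendsto_fst
  have h₂ : Tendsto (fun p : ℕ × ℕ ↦ p.2) (atTop ×ˢ atTop) atTop := tendsto_snd
  have hsq := ((hc.comp (h₁.atTop_add_atTop h₁)).sub
    ((hc.comp (h₁.atTop_add_atTop h₂)).const_mul 2)).add (hc.comp (h₂.atTop_add_atTop h₂))
  rw [show L - 2 * L + L = 0 by ring] at hsq
  refine (Real.sqrt_zero ▸ hsq.sqrt).congr fun p ↦ ?_
  rw [dist_eq_norm, ← Real.sqrt_sq (norm_nonneg _), norm_pow_apply_sub_pow_apply_sq hT]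
  rfl

theorem exists_tendsto_pow_apply [CompleteSpace E] (x : E) :
    ∃ z, T z = z ∧ Tendsto (fun n ↦ (T ^ n) x) atTop (𝓝 z) := by
  obtain ⟨z, hz⟩ := cauchySeq_tendsto_of_complete (cauchySeq_pow_apply hT hT₁ x)
  refine ⟨z, ?_, hz⟩
  simp only [FunLike.coe_pow_eq_iterate] at hz
  exact isFixedPt_of_tendsto_iterate hz T.continuous.continuousAt

end Moments

variable [CompleteSpace E] [CompleteSpace F]

theorem norm_adjoint_comp_self_apply_sq_le {A : E →L[𝕜] F} (hA : ‖A‖ ≤ 1) (u : E) :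
    ‖(A† ∘L A) u‖ ^ 2 ≤ re ⟪(A† ∘L A) u, u⟫_𝕜 := by
  rw [← apply_norm_sq_eq_inner_adjoint_left]
  gcongr
  calc ‖(A†) (A u)‖ ≤ ‖A†‖ * ‖A u‖ := le_opNorm _ _
    _ ≤ ‖A u‖ := by
      rw [LinearIsometryEquiv.norm_map]
      exact mul_le_of_le_one_left (norm_nonneg _) hA

theorem exists_tendsto_adjoint_comp_self_pow_apply {A : E →L[𝕜] F} (hA : ‖A‖ ≤ 1) (x : E) :
    ∃ z, ‖A z‖ = ‖z‖ ∧ Tendsto (fun n ↦ ((A† ∘L A) ^ n) x) atTop (𝓝 z) := by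
  obtain ⟨z, hfix, hz⟩ := exists_tendsto_pow_apply (isPositive_adjoint_comp_self A).isSymmetric
    (norm_adjoint_comp_self_apply_sq_le hA) x
  refine ⟨z, ?_, hz⟩
  rw [← sq_eq_sq₀ (norm_nonneg _) (norm_nonneg _), apply_norm_sq_eq_inner_adjoint_left, hfix,
    inner_self_eq_norm_sq]

end ContinuousLinearMap

namespace Submodule

variable {𝕜 E : Type*} [RCLike 𝕜] [NormedAddCommGroup E] [InnerProductSpace 𝕜 E]

theorem coe_starProjection_orthogonal_eq {V : Submodule 𝕜 E} [Vᗮ.HasOrthogonalProjection]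
    {Q : E → E} (hQ : ∀ x, Q x ∈ Vᗮ ∧ x - Q x ∈ V) : ⇑Vᗮ.starProjection = Q :=
  funext fun x ↦ eq_starProjection_of_mem_orthogonal (hQ x).1 (le_orthogonal_orthogonal V (hQ x).2)

variable {K₁ K₂ : Submodule 𝕜 E} [K₁.HasOrthogonalProjection] [K₂.HasOrthogonalProjection]

theorem mem_inf_of_norm_starProjection_starProjection_eq {z : E}
    (h : ‖K₁.starProjection (K₂.starProjection z)‖ = ‖z‖) : z ∈ K₁ ⊓ K₂ := by
  have h₁ := norm_starProjection_apply_le K₁ (K₂.starProjection z)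
  have h₂ := norm_starProjection_apply_le K₂ z
  have hz₂ : z ∈ K₂ := (mem_iff_norm_starProjection K₂ z).2 (by linarith)
  rw [starProjection_eq_self_iff.2 hz₂] at h
  exact ⟨(mem_iff_norm_starProjection K₁ z).2 h, hz₂⟩

theorem norm_starProjection_mul_starProjection_le :
    ‖K₁.starProjection * K₂.starProjection‖ ≤ 1 :=
  (norm_mul_le _ _).trans
    (mul_le_one₀ (starProjection_norm_le K₁) (norm_nonneg _) (starProjection_norm_le K₂))

theorem semiconjBy_starProjection_mul_starProjection [CompleteSpace E] :
    SemiconjBy (K₁.starProjection * K₂.starProjection)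
      ((K₁.starProjection * K₂.starProjection)† ∘L (K₁.starProjection * K₂.starProjection))
      (K₁.starProjection * K₂.starProjection) := by
  have h₁ := K₁.isIdempotentElem_starProjection.eq
  have h₂ := K₂.isIdempotentElem_starProjection.eq
  rw [SemiconjBy, ← ContinuousLinearMap.mul_def, ← ContinuousLinearMap.star_eq_adjoint, star_mul,
    (isSelfAdjoint_starProjection K₁).star_eq, (isSelfAdjoint_starProjection K₂).star_eq]
  simp only [mul_assoc]
  rw [← mul_assoc K₂.starProjection K₂.starProjection, h₂,
    ← mul_assoc K₁.starProjection K₁.starProjection, h₁]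

end Submodule

theorem schwarz_alternating_strong_convergence_general
    {H : Type*} [NormedAddCommGroup H] [InnerProductSpace ℝ H] [CompleteSpace H]
    (V₁ V₂ : Submodule ℝ H)
    (hdense : Dense ((V₁ ⊔ V₂ : Submodule ℝ H) : Set H))
    (Q₁ Q₂ : H → H)
    (hQ₁ : ∀ x, Q₁ x ∈ V₁ᗮ ∧ x - Q₁ x ∈ V₁)
    (hQ₂ : ∀ x, Q₂ x ∈ V₂ᗮ ∧ x - Q₂ x ∈ V₂) :
    ∀ x : H, Tendsto (fun n : ℕ => (Q₁ ∘ Q₂)^[n] x) atTop (𝓝 0) := by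
  intro x
  set A := V₁ᗮ.starProjection * V₂ᗮ.starProjection
  have hA : ⇑A = Q₁ ∘ Q₂ := by
    rw [FunLike.coe_mul_eq_comp V₁ᗮ.starProjection, coe_starProjection_orthogonal_eq hQ₁,
      coe_starProjection_orthogonal_eq hQ₂]
  obtain ⟨z, hAz, hz⟩ :=
    A.exists_tendsto_adjoint_comp_self_pow_apply norm_starProjection_mul_starProjection_le x
  have hz₀ : z = 0 := by
    have hbot : (V₁ ⊔ V₂)ᗮ = ⊥ := topologicalClosure_eq_top_iff.1
      (dense_iff_topologicalClosure_eq_top.1 hdense)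
    have hz := mem_inf_of_norm_starProjection_starProjection_eq hAz
    rwa [inf_orthogonal, hbot, mem_bot ℝ] at hz
  have hpow (n : ℕ) : A ^ (n + 1) = A * (A† ∘L A) ^ n :=
    (pow_succ A n).trans (semiconjBy_starProjection_mul_starProjection.pow_right n).symm
  have hlim : Tendsto (fun n ↦ A (((A† ∘L A) ^ n) x)) atTop (𝓝 0) := by
    rw [← A.map_zero, ← hz₀]
    exact (A.continuous.tendsto z).comp hz
  simp_rw [← hA, ← FunLike.coe_pow_eq_iterate A]
  rw [← tendsto_add_atTop_iff_nat 1]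
  simpa only [hpow, mul_apply_eq_comp] using hlim

/-- Lions's strong convergence for the alternating Schwarz method: if `V₁, V₂` are closed
subspaces of a real Hilbert space with `V₁ + V₂` dense in `H`, and `Q₁, Q₂` are the
orthogonal projections onto `V₁ᗮ` and `V₂ᗮ`, then `(Q₁ ∘ Q₂)^n x → 0` for every `x`. -/
theorem schwarz_alternating_strong_convergence
    {H : Type*} [NormedAddCommGroup H] [InnerProductSpace ℝ H] [CompleteSpace H]
    (V₁ V₂ : Submodule ℝ H)
    (hV₁ : IsClosed (V₁ : Set H)) (hV₂ : IsClosed (V₂ : Set H))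
    (hdense : Dense ((V₁ ⊔ V₂ : Submodule ℝ H) : Set H))
    (Q₁ Q₂ : H → H)
    (hQ₁ : ∀ x, Q₁ x ∈ V₁ᗮ ∧ x - Q₁ x ∈ V₁)
    (hQ₂ : ∀ x, Q₂ x ∈ V₂ᗮ ∧ x - Q₂ x ∈ V₂) :
    ∀ x : H, Tendsto (fun n : ℕ => (Q₁ ∘ Q₂)^[n] x) atTop (𝓝 0) :=
  schwarz_alternating_strong_convergence_general V₁ V₂ hdense Q₁ Q₂ hQ₁ hQ₂
end
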